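/- Under the illumination setup, the centroid curve r₄ is differentiable with r₄'(s) = (1/(6δ̂)) · ( det(c(s), γ'(t(s)))²·det(γ'(s), γ''(s)) / det(γ'(s), γ'(t(s)))² ) · c(s) for every s. In particular, r₄ is a regular parametrization and its tangent vector at r₄(s) is parallel to the chord c(s). -/

import Mathlib

open Real MeasureTheory intervalIntegral

noncomputable section

/-- The Euclidean plane. -/
abbrev R2 := EuclideanSpace ℝ (Fin 2)

/-- The planar determinant `det(u,v) = u₁v₂ − u₂v₁`. -/
def det2 (u v : R2) : ℝ := u 0 * v 1 - u 1 * v 0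

/-- The intersection point of the tangent lines to `γ` at `γ(s)` and `γ(t(s))`. -/
def tangentPole (γ : ℝ → R2) (t : ℝ → ℝ) (s : ℝ) : R2 :=
  γ s + (det2 (γ (t s) - γ s) (deriv γ (t s)) / det2 (deriv γ s) (deriv γ (t s))) • deriv γ s

/-- The centroid curve of illumination
`r₄(s) = r₃(s) − (1/(3δ̂))·∫_s^{t(s)} det(γ(u) − r₃(s), γ'(u))·(γ(u) − r₃(s)) du`. -/
def illumCentroid (γ : ℝ → R2) (t : ℝ → ℝ) (δ' : ℝ) (s : ℝ) : R2 :=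
  tangentPole γ t s -
    (1/(3*δ')) • ∫ u in s..t s,
      det2 (γ u - tangentPole γ t s) (deriv γ u) • (γ u - tangentPole γ t s)

namespace Stmt6Aux

lemma r2ext {u v : R2} (h0 : u 0 = v 0) (h1 : u 1 = v 1) : u = v := by
  apply PiLp.ext; intro i; fin_cases i <;> assumption

lemma det2_add_left (u v w : R2) : det2 (u + v) w = det2 u w + det2 v w := by
  simp [det2, PiLp.add_apply]; ring

lemma det2_smul_left (a : ℝ) (u w : R2) : det2 (a • u) w = a * det2 u w := by
  simp [det2, PiLp.smul_apply, smul_eq_mul]; ring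

lemma det2_sub_left (u v w : R2) : det2 (u - v) w = det2 u w - det2 v w := by
  simp [det2, PiLp.sub_apply]; ring

lemma det2_add_right (u v w : R2) : det2 u (v + w) = det2 u v + det2 u w := by
  simp [det2, PiLp.add_apply]; ring

lemma det2_smul_right (a : ℝ) (u w : R2) : det2 u (a • w) = a * det2 u w := by
  simp [det2, PiLp.smul_apply, smul_eq_mul]; ring

lemma det2_sub_right (u v w : R2) : det2 u (v - w) = det2 u v - det2 u w := by
  simp [det2, PiLp.sub_apply]; ring

lemma det2_zero_left (w : R2) : det2 0 w = 0 := by simp [det2]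

lemma det2_zero_right (w : R2) : det2 w 0 = 0 := by simp [det2]

lemma det2_self (w : R2) : det2 w w = 0 := by simp [det2]; ring

lemma hasDerivAt_comp_apply {f : ℝ → R2} {f' : R2} {x : ℝ} (hf : HasDerivAt f f' x)
    (i : Fin 2) : HasDerivAt (fun s => f s i) (f' i) x := by
  have := (EuclideanSpace.proj (𝕜 := ℝ) i).hasFDerivAt.comp_hasDerivAt x hf
  exact this

lemma continuous_comp_apply {f : ℝ → R2} (hf : Continuous f) (i : Fin 2) :
    Continuous fun s => f s i := by
  have := (EuclideanSpace.proj (𝕜 := ℝ) (ι := Fin 2) i).continuous.comp hf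
  exact this

lemma hasDerivAt_det2 {f g : ℝ → R2} {f' g' : R2} {x : ℝ}
    (hf : HasDerivAt f f' x) (hg : HasDerivAt g g' x) :
    HasDerivAt (fun s => det2 (f s) (g s)) (det2 f' (g x) + det2 (f x) g') x := by
  have h := ((hasDerivAt_comp_apply hf 0).mul (hasDerivAt_comp_apply hg 1)).sub
    ((hasDerivAt_comp_apply hf 1).mul (hasDerivAt_comp_apply hg 0))
  refine h.congr_deriv ?_
  simp [det2]; ring

lemma continuous_det2 {f g : ℝ → R2} (hf : Continuous f) (hg : Continuous g) :
    Continuous fun s => det2 (f s) (g s) :=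
  ((continuous_comp_apply hf 0).mul (continuous_comp_apply hg 1)).sub
    ((continuous_comp_apply hf 1).mul (continuous_comp_apply hg 0))

lemma hasDerivAt_intervalIntegral {E : Type*} [NormedAddCommGroup E] [NormedSpace ℝ E]
    [CompleteSpace E] {f : ℝ → E} (hf : Continuous f) {t : ℝ → ℝ} {τ s : ℝ}
    (ht : HasDerivAt t τ s) :
    HasDerivAt (fun σ => ∫ u in σ..t σ, f u) (τ • f (t s) - f s) s := by
  have h1 : HasDerivAt (fun σ => ∫ u in (0:ℝ)..t σ, f u) (τ • f (t s)) s :=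
    HasDerivAt.scomp s ((hf.integral_hasStrictDerivAt 0 (t s)).hasDerivAt) ht
  have h2 : HasDerivAt (fun σ => ∫ u in (0:ℝ)..σ, f u) (f s) s :=
    (hf.integral_hasStrictDerivAt 0 s).hasDerivAt
  have hfun : (fun σ => ∫ u in σ..t σ, f u)
      = fun σ => (∫ u in (0:ℝ)..t σ, f u) - ∫ u in (0:ℝ)..σ, f u := by
    funext σ
    rw [intervalIntegral.integral_interval_sub_left (hf.intervalIntegrable _ _)
      (hf.intervalIntegrable _ _)]
  rw [hfun]
  exact h1.sub h2

end Stmt6Aux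

open Stmt6Aux

set_option maxHeartbeats 1000000 in
/-- derivative of the centroid curve of illumination. -/
theorem stmt6
    (γ : ℝ → R2) (L : ℝ) (hL : 0 < L)
    (hγ : ContDiff ℝ 3 γ)
    (hper : ∀ s, γ (s + L) = γ s)
    (hreg : ∀ s, deriv γ s ≠ 0)
    (hinj : Set.InjOn γ (Set.Ico 0 L))
    (hor : 0 < ∫ s in (0:ℝ)..L, det2 (γ s) (deriv γ s))
    (hcurv : ∀ s, 0 < det2 (deriv γ s) (deriv (deriv γ) s))
    (K : Set R2) (hKconv : Convex ℝ K) (hKcomp : IsCompact K)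
    (hKint : (interior K).Nonempty) (hKbd : frontier K = Set.range γ)
    (δ' : ℝ) (hδ0 : 0 < δ')
    (t : ℝ → ℝ) (ht : ContDiff ℝ 1 t)
    (htrange : ∀ s, s < t s ∧ t s < s + L)
    (hpar : ∀ s, det2 (deriv γ s) (deriv γ (t s)) ≠ 0)
    (hc1 : ∀ s, det2 (γ (t s) - γ s) (deriv γ s) ≠ 0)
    (hc2 : ∀ s, det2 (γ (t s) - γ s) (deriv γ (t s)) ≠ 0)
    (hA : ∀ s, -(1/2) * ∫ u in s..t s, det2 (γ u - tangentPole γ t s) (deriv γ u) = δ') :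
    ∀ s : ℝ,
      HasDerivAt (illumCentroid γ t δ')
        ((1/(6*δ') *
            (det2 (γ (t s) - γ s) (deriv γ (t s)) ^ 2 * det2 (deriv γ s) (deriv (deriv γ) s) /
              det2 (deriv γ s) (deriv γ (t s)) ^ 2)) • (γ (t s) - γ s)) s ∧
      deriv (illumCentroid γ t δ') s ≠ 0 ∧
      ∃ a : ℝ, a ≠ 0 ∧ deriv (illumCentroid γ t δ') s = a • (γ (t s) - γ s) := by
  -- ## global smoothness facts
  have hγd : Differentiable ℝ γ := hγ.differentiable (by norm_num)
  have hγ2 : ContDiff ℝ 2 (deriv γ) := by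
    rw [show (3 : WithTop ℕ∞) = 2 + 1 by norm_num, contDiff_succ_iff_deriv] at hγ
    exact hγ.2.2
  have hγ1d : Differentiable ℝ (deriv γ) := hγ2.differentiable (by norm_num)
  have hγc : Continuous γ := hγd.continuous
  have hγ1c : Continuous (deriv γ) := hγ1d.continuous
  have Hγ : ∀ x, HasDerivAt γ (deriv γ x) x := fun x => (hγd x).hasDerivAt
  have Hγ1 : ∀ x, HasDerivAt (deriv γ) (deriv (deriv γ) x) x := fun x => (hγ1d x).hasDerivAt
  have htd : Differentiable ℝ t := ht.differentiable one_ne_zero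
  -- ## continuity of the basic integrands
  have cA : Continuous fun u => det2 (γ u) (deriv γ u) • γ u :=
    (continuous_det2 hγc hγ1c).smul hγc
  have cB : Continuous fun u => deriv γ u 1 • γ u :=
    (continuous_comp_apply hγ1c 1).smul hγc
  have cC : Continuous fun u => deriv γ u 0 • γ u :=
    (continuous_comp_apply hγ1c 0).smul hγc
  have cD : Continuous fun u => det2 (γ u) (deriv γ u) := continuous_det2 hγc hγ1c
  -- ## the chord integral
  have hchord : ∀ (p : R2) (a b : ℝ),
      (∫ u in a..b, det2 p (deriv γ u)) = det2 p (γ b - γ a) := by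
    intro p a b
    rw [det2_sub_right]
    have hd : ∀ u ∈ Set.uIcc a b, HasDerivAt (fun y => det2 p (γ y)) (det2 p (deriv γ u)) u := by
      intro u _
      have := hasDerivAt_det2 (hasDerivAt_const u p) (Hγ u)
      simpa [det2_zero_left] using this
    exact intervalIntegral.integral_eq_sub_of_hasDerivAt hd
      ((continuous_det2 continuous_const hγ1c).intervalIntegrable a b)
  -- ## decomposition of the vector integral
  have decompV : ∀ (p : R2) (a b : ℝ),
      (∫ u in a..b, det2 (γ u - p) (deriv γ u) • (γ u - p))
        = (∫ u in a..b, det2 (γ u) (deriv γ u) • γ u)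
          - p 0 • (∫ u in a..b, deriv γ u 1 • γ u)
          + p 1 • (∫ u in a..b, deriv γ u 0 • γ u)
          - (∫ u in a..b, det2 (γ u) (deriv γ u)) • p
          + det2 p (γ b - γ a) • p := by
    intro p a b
    have e1 : (fun u => det2 (γ u - p) (deriv γ u) • (γ u - p))
        = fun u => (((det2 (γ u) (deriv γ u) • γ u - p 0 • (deriv γ u 1 • γ u))
            + p 1 • (deriv γ u 0 • γ u)) - det2 (γ u) (deriv γ u) • p)
          + det2 p (deriv γ u) • p := by
      funext u
      apply r2ext <;>
        simp [det2, PiLp.add_apply, PiLp.sub_apply, PiLp.smul_apply, smul_eq_mul] <;> ring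
    have i1 : IntervalIntegrable (fun u => det2 (γ u) (deriv γ u) • γ u) volume a b :=
      cA.intervalIntegrable a b
    have i2 : IntervalIntegrable (fun u => p 0 • (deriv γ u 1 • γ u)) volume a b :=
      (cB.const_smul (p 0)).intervalIntegrable a b
    have i3 : IntervalIntegrable (fun u => p 1 • (deriv γ u 0 • γ u)) volume a b :=
      (cC.const_smul (p 1)).intervalIntegrable a b
    have i4 : IntervalIntegrable (fun u => det2 (γ u) (deriv γ u) • p) volume a b :=
      (cD.smul continuous_const).intervalIntegrable a b
    have i5 : IntervalIntegrable (fun u => det2 p (deriv γ u) • p) volume a b :=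
      ((continuous_det2 continuous_const hγ1c).smul continuous_const).intervalIntegrable a b
    rw [e1, intervalIntegral.integral_add (((i1.sub i2).add i3).sub i4) i5,
      intervalIntegral.integral_sub ((i1.sub i2).add i3) i4,
      intervalIntegral.integral_add (i1.sub i2) i3,
      intervalIntegral.integral_sub i1 i2,
      intervalIntegral.integral_smul, intervalIntegral.integral_smul,
      intervalIntegral.integral_smul_const, intervalIntegral.integral_smul_const, hchord]
  -- ## decomposition of the scalar integral
  have decompS : ∀ (p : R2) (a b : ℝ),
      (∫ u in a..b, det2 (γ u - p) (deriv γ u))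
        = (∫ u in a..b, det2 (γ u) (deriv γ u)) - det2 p (γ b - γ a) := by
    intro p a b
    have e1 : (fun u => det2 (γ u - p) (deriv γ u))
        = fun u => det2 (γ u) (deriv γ u) - det2 p (deriv γ u) := by
      funext u; rw [det2_sub_left]
    rw [e1, intervalIntegral.integral_sub (cD.intervalIntegrable a b)
      ((continuous_det2 continuous_const hγ1c).intervalIntegrable a b), hchord]
  intro s
  have htds : HasDerivAt t (deriv t s) s := (htd s).hasDerivAt
  set gs := γ s with hgsdef
  set hts := γ (t s) with htsdef
  set g1s := deriv γ s with hg1def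
  set h1ts := deriv γ (t s) with hh1def
  set g2s := deriv (deriv γ) s with hg2def
  set τ := deriv t s with hτdef
  set cc := hts - gs with hccdef
  set lam := det2 cc h1ts / det2 g1s h1ts with hlamdef
  have hpars : det2 g1s h1ts ≠ 0 := hpar s
  have hc1s : det2 cc g1s ≠ 0 := hc1 s
  have hc2s : det2 cc h1ts ≠ 0 := hc2 s
  have hcurvs : det2 g1s g2s ≠ 0 := ne_of_gt (hcurv s)
  have hδ : (δ':ℝ) ≠ 0 := ne_of_gt hδ0
  have hct : HasDerivAt (fun σ => γ (t σ)) (τ • h1ts) s := by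
    exact HasDerivAt.scomp s (Hγ (t s)) htds
  have hcF : HasDerivAt (fun σ => γ (t σ) - γ σ) (τ • h1ts - g1s) s := hct.sub (Hγ s)
  have hdt : HasDerivAt (fun σ => deriv γ (t σ)) (τ • deriv (deriv γ) (t s)) s := by
    exact HasDerivAt.scomp s (Hγ1 (t s)) htds
  obtain ⟨ld, hld⟩ : ∃ l, HasDerivAt
      (fun σ => det2 (γ (t σ) - γ σ) (deriv γ (t σ)) / det2 (deriv γ σ) (deriv γ (t σ))) l s :=
    ⟨_, (hasDerivAt_det2 hcF hdt).div (hasDerivAt_det2 (Hγ1 s) hdt) (hpar s)⟩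
  set pp := g1s + (lam • g2s + ld • g1s) with hppdef
  have hPF : HasDerivAt (tangentPole γ t) pp s := by
    unfold tangentPole
    exact (Hγ s).add (hld.smul (Hγ1 s))
  have hP0 : HasDerivAt (fun σ => tangentPole γ t σ 0) (pp 0) s := hasDerivAt_comp_apply hPF 0
  have hP1 : HasDerivAt (fun σ => tangentPole γ t σ 1) (pp 1) s := hasDerivAt_comp_apply hPF 1
  set Ps := tangentPole γ t s with hPsdef
  have hPs : Ps = gs + lam • g1s := rfl
  have hhts : hts = gs + cc := by rw [hccdef]; abel
  set IBs := ∫ u in s..t s, deriv γ u 1 • γ u with hIBdef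
  set ICs := ∫ u in s..t s, deriv γ u 0 • γ u with hICdef
  set IDs := ∫ u in s..t s, det2 (γ u) (deriv γ u) with hIDdef
  have hIA : HasDerivAt (fun σ => ∫ u in σ..t σ, det2 (γ u) (deriv γ u) • γ u)
      (τ • (det2 hts h1ts • hts) - det2 gs g1s • gs) s := hasDerivAt_intervalIntegral cA htds
  have hIB : HasDerivAt (fun σ => ∫ u in σ..t σ, deriv γ u 1 • γ u)
      (τ • (h1ts 1 • hts) - g1s 1 • gs) s := hasDerivAt_intervalIntegral cB htds
  have hIC : HasDerivAt (fun σ => ∫ u in σ..t σ, deriv γ u 0 • γ u)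
      (τ • (h1ts 0 • hts) - g1s 0 • gs) s := hasDerivAt_intervalIntegral cC htds
  have hID : HasDerivAt (fun σ => ∫ u in σ..t σ, det2 (γ u) (deriv γ u))
      (τ * det2 hts h1ts - det2 gs g1s) s := hasDerivAt_intervalIntegral cD htds
  have hdet : HasDerivAt (fun σ => det2 (tangentPole γ t σ) (γ (t σ) - γ σ))
      (det2 pp cc + det2 Ps (τ • h1ts - g1s)) s := hasDerivAt_det2 hPF hcF
  -- constancy of the area gives `det2 pp cc = 0`
  have hAFconst : (fun σ => (∫ u in σ..t σ, det2 (γ u) (deriv γ u))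
      - det2 (tangentPole γ t σ) (γ (t σ) - γ σ)) = fun _ => -(2*δ') := by
    funext σ
    have h1 := hA σ
    rw [decompS (tangentPole γ t σ) σ (t σ)] at h1
    linarith
  have hzero : (τ * det2 hts h1ts - det2 gs g1s)
      - (det2 pp cc + det2 Ps (τ • h1ts - g1s)) = 0 := by
    have hone := hID.sub hdet
    have htwo : HasDerivAt (fun σ => (∫ u in σ..t σ, det2 (γ u) (deriv γ u))
        - det2 (tangentPole γ t σ) (γ (t σ) - γ σ)) 0 s := by
      rw [hAFconst]; exact hasDerivAt_const s _
    exact hone.unique htwo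
  have hR1 : det2 Ps h1ts = det2 hts h1ts := by
    rw [hPs, hhts, det2_add_left, det2_add_left, det2_smul_left, hlamdef,
      div_mul_cancel₀ _ hpars]
  have hR2 : det2 Ps g1s = det2 gs g1s := by
    rw [hPs, det2_add_left, det2_smul_left, det2_self, mul_zero, add_zero]
  have hexp : det2 Ps (τ • h1ts - g1s) = τ * det2 Ps h1ts - det2 Ps g1s := by
    rw [det2_sub_right, det2_smul_right]
  have hR3 : det2 pp cc = 0 := by
    rw [hexp, hR1, hR2] at hzero
    linarith
  -- integration by parts identity
  have hR4 : (2:ℝ) • (pp 1 • ICs - pp 0 • IBs) + IDs • pp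
      = det2 hts pp • hts - det2 gs pp • gs := by
    have hW : ∀ u ∈ Set.uIcc s (t s), HasDerivAt (fun y => det2 (γ y) pp • γ y)
        ((2:ℝ) • (det2 (deriv γ u) pp • γ u) + det2 (γ u) (deriv γ u) • pp) u := by
      intro u _
      have h1 := (hasDerivAt_det2 (Hγ u) (hasDerivAt_const u pp)).smul (Hγ u)
      refine h1.congr_deriv ?_
      apply r2ext <;>
        simp [det2, PiLp.add_apply, PiLp.sub_apply, PiLp.smul_apply, smul_eq_mul] <;> ring
    have c1 : Continuous fun u => det2 (deriv γ u) pp • γ u :=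
      (continuous_det2 hγ1c continuous_const).smul hγc
    have c2 : Continuous fun u => det2 (γ u) (deriv γ u) • pp := cD.smul continuous_const
    have heq := intervalIntegral.integral_eq_sub_of_hasDerivAt hW
      (((c1.const_smul (2:ℝ)).add c2).intervalIntegrable s (t s))
    rw [intervalIntegral.integral_add (f := fun u => (2:ℝ) • (det2 (deriv γ u) pp • γ u))
      ((c1.const_smul (2:ℝ)).intervalIntegrable s (t s))
      (c2.intervalIntegrable s (t s)), intervalIntegral.integral_smul,
      intervalIntegral.integral_smul_const] at heq
    have hsplit : (∫ u in s..t s, det2 (deriv γ u) pp • γ u)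
        = pp 1 • (∫ u in s..t s, deriv γ u 0 • γ u)
          - pp 0 • (∫ u in s..t s, deriv γ u 1 • γ u) := by
      have e : (fun u => det2 (deriv γ u) pp • γ u)
          = fun u => pp 1 • (deriv γ u 0 • γ u) - pp 0 • (deriv γ u 1 • γ u) := by
        funext u
        apply r2ext <;>
          simp [det2, PiLp.sub_apply, PiLp.smul_apply, smul_eq_mul] <;> ring
      rw [e, intervalIntegral.integral_sub (f := fun u => pp 1 • (deriv γ u 0 • γ u))
        (g := fun u => pp 0 • (deriv γ u 1 • γ u))
        ((cC.const_smul (pp 1)).intervalIntegrable s (t s))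
        ((cB.const_smul (pp 0)).intervalIntegrable s (t s)),
        intervalIntegral.integral_smul, intervalIntegral.integral_smul]
    rw [hsplit] at heq
    exact heq
  -- the value of the D-integral from the constant area
  have hR5 : IDs = det2 Ps cc - 2*δ' := by
    have h1 := hA s
    rw [decompS (tangentPole γ t s) s (t s)] at h1
    rw [show (∫ u in s..t s, det2 (γ u) (deriv γ u)) = IDs from rfl,
      show tangentPole γ t s = Ps from rfl, show γ (t s) - γ s = cc from rfl] at h1
    linarith
  -- collinearity of pp with the chord
  have hacol : pp = (det2 pp g1s / det2 cc g1s) • cc := by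
    apply r2ext
    · simp only [PiLp.smul_apply, smul_eq_mul]
      rw [div_mul_eq_mul_div, eq_div_iff hc1s]
      simp only [det2] at hR3 ⊢
      linear_combination (-(g1s 0)) * hR3
    · simp only [PiLp.smul_apply, smul_eq_mul]
      rw [div_mul_eq_mul_div, eq_div_iff hc1s]
      simp only [det2] at hR3 ⊢
      linear_combination (-(g1s 1)) * hR3
  have hared : (det2 pp g1s / det2 cc g1s) * det2 cc g1s = lam * det2 g2s g1s := by
    rw [div_mul_cancel₀ _ hc1s, hppdef, det2_add_left, det2_add_left, det2_smul_left,
      det2_smul_left, det2_self]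
    ring
  have hsw : det2 g2s g1s = -det2 g1s g2s := by simp [det2]; ring
  have hsw3 : det2 cc g1s = -det2 g1s cc := by simp [det2]; ring
  have hK2 : det2 hts cc • hts - det2 gs cc • gs - det2 Ps cc • cc
      = (lam * det2 cc g1s) • cc := by
    rw [hhts, hPs]
    simp only [det2_add_left, det2_smul_left, det2_self, add_zero, mul_zero]
    rw [hsw3]
    module
  have hkey : (det2 hts pp • hts - det2 gs pp • gs) - det2 Ps cc • pp
      = -((lam^2 * det2 g1s g2s) • cc) := by
    calc (det2 hts pp • hts - det2 gs pp • gs) - det2 Ps cc • pp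
        = (det2 hts ((det2 pp g1s / det2 cc g1s) • cc) • hts
            - det2 gs ((det2 pp g1s / det2 cc g1s) • cc) • gs)
            - det2 Ps cc • ((det2 pp g1s / det2 cc g1s) • cc) := by rw [← hacol]
      _ = (det2 pp g1s / det2 cc g1s)
            • (det2 hts cc • hts - det2 gs cc • gs - det2 Ps cc • cc) := by
            rw [det2_smul_right, det2_smul_right]; module
      _ = (det2 pp g1s / det2 cc g1s) • ((lam * det2 cc g1s) • cc) := by rw [hK2]
      _ = ((det2 pp g1s / det2 cc g1s) * (lam * det2 cc g1s)) • cc := by rw [smul_smul]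
      _ = -((lam^2 * det2 g1s g2s) • cc) := by
            rw [← neg_smul]
            congr 1
            linear_combination lam * hared + lam^2 * hsw
  -- rewrite the centroid curve via the decomposition
  have hIllum : illumCentroid γ t δ' = fun σ =>
      tangentPole γ t σ - (1/(3*δ')) • ((∫ u in σ..t σ, det2 (γ u) (deriv γ u) • γ u)
        - tangentPole γ t σ 0 • (∫ u in σ..t σ, deriv γ u 1 • γ u)
        + tangentPole γ t σ 1 • (∫ u in σ..t σ, deriv γ u 0 • γ u)
        - (∫ u in σ..t σ, det2 (γ u) (deriv γ u)) • tangentPole γ t σ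
        + det2 (tangentPole γ t σ) (γ (t σ) - γ σ) • tangentPole γ t σ) := by
    funext σ; unfold illumCentroid; rw [decompV]
  have hBIG : HasDerivAt (fun σ =>
      (∫ u in σ..t σ, det2 (γ u) (deriv γ u) • γ u)
        - tangentPole γ t σ 0 • (∫ u in σ..t σ, deriv γ u 1 • γ u)
        + tangentPole γ t σ 1 • (∫ u in σ..t σ, deriv γ u 0 • γ u)
        - (∫ u in σ..t σ, det2 (γ u) (deriv γ u)) • tangentPole γ t σ
        + det2 (tangentPole γ t σ) (γ (t σ) - γ σ) • tangentPole γ t σ)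
      (((((τ • (det2 hts h1ts • hts) - det2 gs g1s • gs)
          - (Ps 0 • (τ • (h1ts 1 • hts) - g1s 1 • gs) + pp 0 • IBs))
          + (Ps 1 • (τ • (h1ts 0 • hts) - g1s 0 • gs) + pp 1 • ICs))
          - (IDs • pp + (τ * det2 hts h1ts - det2 gs g1s) • Ps))
          + (det2 Ps cc • pp + (det2 pp cc + det2 Ps (τ • h1ts - g1s)) • Ps)) s :=
    (((hIA.sub (hP0.smul hIB)).add (hP1.smul hIC)).sub (hID.smul hPF)).add (hdet.smul hPF)
  have hX : pp 1 • ICs - pp 0 • IBs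
      = (2:ℝ)⁻¹ • ((det2 hts pp • hts - det2 gs pp • gs) - IDs • pp) := by
    have h2 : (det2 hts pp • hts - det2 gs pp • gs) - IDs • pp
        = (2:ℝ) • (pp 1 • ICs - pp 0 • IBs) := by
      rw [← hR4]; module
    rw [h2]; module
  have hv1 : det2 hts h1ts = Ps 0 * h1ts 1 - Ps 1 * h1ts 0 := by rw [← hR1]; rfl
  have hv2 : det2 gs g1s = Ps 0 * g1s 1 - Ps 1 * g1s 0 := by rw [← hR2]; rfl
  have hB0 : (τ • (det2 hts h1ts • hts) - det2 gs g1s • gs)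
      - Ps 0 • (τ • (h1ts 1 • hts) - g1s 1 • gs)
      + Ps 1 • (τ • (h1ts 0 • hts) - g1s 0 • gs) = 0 := by
    apply r2ext
    · simp only [PiLp.add_apply, PiLp.sub_apply, PiLp.smul_apply, smul_eq_mul,
        PiLp.zero_apply]
      linear_combination (τ * hts 0) * hv1 - gs 0 * hv2
    · simp only [PiLp.add_apply, PiLp.sub_apply, PiLp.smul_apply, smul_eq_mul,
        PiLp.zero_apply]
      linear_combination (τ * hts 1) * hv1 - gs 1 * hv2
  have hβ : (1/(3*δ')) * (3*δ') = 1 := by field_simp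
  have hEsplit : ((((τ • (det2 hts h1ts • hts) - det2 gs g1s • gs)
          - (Ps 0 • (τ • (h1ts 1 • hts) - g1s 1 • gs) + pp 0 • IBs))
          + (Ps 1 • (τ • (h1ts 0 • hts) - g1s 0 • gs) + pp 1 • ICs))
          - (IDs • pp + (τ * det2 hts h1ts - det2 gs g1s) • Ps))
          + (det2 Ps cc • pp + (det2 pp cc + det2 Ps (τ • h1ts - g1s)) • Ps)
      = (2:ℝ)⁻¹ • ((det2 hts pp • hts - det2 gs pp • gs) - det2 Ps cc • pp)
        + (3*δ') • pp := by
    rw [hR3, hexp, hR1, hR2]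
    calc ((((τ • (det2 hts h1ts • hts) - det2 gs g1s • gs)
          - (Ps 0 • (τ • (h1ts 1 • hts) - g1s 1 • gs) + pp 0 • IBs))
          + (Ps 1 • (τ • (h1ts 0 • hts) - g1s 0 • gs) + pp 1 • ICs))
          - (IDs • pp + (τ * det2 hts h1ts - det2 gs g1s) • Ps))
          + (det2 Ps cc • pp + (0 + (τ * det2 hts h1ts - det2 gs g1s)) • Ps)
        = ((τ • (det2 hts h1ts • hts) - det2 gs g1s • gs)
            - Ps 0 • (τ • (h1ts 1 • hts) - g1s 1 • gs)
            + Ps 1 • (τ • (h1ts 0 • hts) - g1s 0 • gs))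
          + ((pp 1 • ICs - pp 0 • IBs) - IDs • pp + det2 Ps cc • pp) := by module
      _ = ((pp 1 • ICs - pp 0 • IBs) - IDs • pp + det2 Ps cc • pp) := by
            rw [hB0, zero_add]
      _ = ((2:ℝ)⁻¹ • ((det2 hts pp • hts - det2 gs pp • gs) - IDs • pp)
            - IDs • pp + det2 Ps cc • pp) := by rw [hX]
      _ = ((2:ℝ)⁻¹ • ((det2 hts pp • hts - det2 gs pp • gs)
              - (det2 Ps cc - 2*δ') • pp)
            - (det2 Ps cc - 2*δ') • pp + det2 Ps cc • pp) := by rw [← hR5]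
      _ = (2:ℝ)⁻¹ • ((det2 hts pp • hts - det2 gs pp • gs) - det2 Ps cc • pp)
            + (3*δ') • pp := by module
  have hmain : HasDerivAt (illumCentroid γ t δ')
      ((1/(6*δ') * (det2 cc h1ts ^ 2 * det2 g1s g2s / det2 g1s h1ts ^ 2)) • cc) s := by
    rw [hIllum]
    have hfull := hPF.sub (hBIG.const_smul (1/(3*δ')))
    have veq : pp - (1/(3*δ')) • (((((τ • (det2 hts h1ts • hts) - det2 gs g1s • gs)
          - (Ps 0 • (τ • (h1ts 1 • hts) - g1s 1 • gs) + pp 0 • IBs))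
          + (Ps 1 • (τ • (h1ts 0 • hts) - g1s 0 • gs) + pp 1 • ICs))
          - (IDs • pp + (τ * det2 hts h1ts - det2 gs g1s) • Ps))
          + (det2 Ps cc • pp + (det2 pp cc + det2 Ps (τ • h1ts - g1s)) • Ps))
        = (1/(6*δ') * (det2 cc h1ts ^ 2 * det2 g1s g2s / det2 g1s h1ts ^ 2)) • cc := by
      rw [hEsplit]
      calc pp - (1/(3*δ')) • ((2:ℝ)⁻¹ • ((det2 hts pp • hts - det2 gs pp • gs)
              - det2 Ps cc • pp) + (3*δ') • pp)
          = (pp - ((1/(3*δ')) * (3*δ')) • pp)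
            - ((1/(3*δ')) * (2:ℝ)⁻¹) • ((det2 hts pp • hts - det2 gs pp • gs)
              - det2 Ps cc • pp) := by module
        _ = - ((1/(3*δ')) * (2:ℝ)⁻¹) • ((det2 hts pp • hts - det2 gs pp • gs)
              - det2 Ps cc • pp) := by rw [hβ, one_smul, sub_self, zero_sub]; module
        _ = - ((1/(3*δ')) * (2:ℝ)⁻¹) • (-((lam^2 * det2 g1s g2s) • cc)) := by rw [hkey]
        _ = (((1/(3*δ')) * (2:ℝ)⁻¹) * (lam^2 * det2 g1s g2s)) • cc := by module
        _ = (1/(6*δ') * (det2 cc h1ts ^ 2 * det2 g1s g2s / det2 g1s h1ts ^ 2)) • cc := by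
              rw [hlamdef]
              congr 1
              field_simp
              ring
    exact veq ▸ hfull
  have hccne : cc ≠ 0 := by
    intro h
    exact hc1s (by rw [h, det2_zero_left])
  have hcoefne : (1/(6*δ') * (det2 cc h1ts ^ 2 * det2 g1s g2s / det2 g1s h1ts ^ 2)) ≠ 0 :=
    mul_ne_zero (by positivity)
      (div_ne_zero (mul_ne_zero (pow_ne_zero 2 hc2s) hcurvs) (pow_ne_zero 2 hpars))
  have hder := hmain.deriv
  exact ⟨hmain, by rw [hder]; exact smul_ne_zero hcoefne hccne, ⟨_, hcoefne, hder⟩⟩
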